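/- Consider the map E : ℝ³ → ℝ⁴ given by E(θ₁,θ₂,θ₃) = (θ₁, θ₂, θ₃, θ₃ − θ₁² + θ₂²). For every ε > 0 and every sign pattern s ∈ {−1,+1}⁴, there exists θ ∈ ℝ³ with ‖θ‖ < ε such that sgn(E_i(θ)) = s_i for all i = 1,...,4; in particular, every one of the 2⁴ sign patterns of E(θ) − E(0) = E(θ) is realized arbitrarily close to θ = 0. -/
import Mathlib


/-- For the map `E : ℝ³ → ℝ⁴`, `E(θ₁,θ₂,θ₃) = (θ₁, θ₂, θ₃, θ₃ − θ₁² + θ₂²)`: for every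
`ε > 0` and every sign pattern `s ∈ {−1,+1}⁴` there exists `θ` with `‖θ‖ < ε` realizing
that sign pattern; i.e., all `2⁴` sign patterns of `E(θ) − E(0) = E(θ)` are realized
arbitrarily close to the origin (persistent pseudo-shattering at `0`). -/
theorem example_persistently_pseudoshattered :
    ∀ ε : ℝ, 0 < ε → ∀ s : Fin 4 → ℝ, (∀ i, s i = 1 ∨ s i = -1) →
      ∃ θ : Fin 3 → ℝ, ‖θ‖ < ε ∧
        (∀ i : Fin 4,
          Real.sign (![θ 0, θ 1, θ 2, θ 2 - (θ 0) ^ 2 + (θ 1) ^ 2] i) = s i) := by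
  intro ε hε s hs
  set δ : ℝ := min (ε/3) (1/2) with hδdef
  have hδ0 : 0 < δ := lt_min (by linarith) (by norm_num)
  have hδε : δ ≤ ε/3 := min_le_left _ _
  have hδ1 : δ ≤ 1/2 := min_le_right _ _
  set a : ℝ := if s 3 = 1 then δ else 2*δ with ha
  set b : ℝ := if s 3 = 1 then 2*δ else δ with hb
  have ha0 : 0 < a := by rw [ha]; split <;> linarith
  have hb0 : 0 < b := by rw [hb]; split <;> linarith
  have ha2 : a ≤ 2*δ := by rw [ha]; split <;> linarith
  have hb2 : b ≤ 2*δ := by rw [hb]; split <;> linarith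
  have hba : b^2 - a^2 = s 3 * (3*δ^2) := by
    rcases hs 3 with h3 | h3
    · rw [ha, hb, if_pos h3, if_pos h3, h3]; ring
    · rw [ha, hb, if_neg (by rw [h3]; norm_num), if_neg (by rw [h3]; norm_num), h3]; ring
  clear_value a b
  clear ha hb
  have habs0 : |s 0| = 1 := by rcases hs 0 with h | h <;> rw [h] <;> norm_num
  have habs1 : |s 1| = 1 := by rcases hs 1 with h | h <;> rw [h] <;> norm_num
  have habs2 : |s 2| = 1 := by rcases hs 2 with h | h <;> rw [h] <;> norm_num
  clear_value δ
  clear hδdef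
  have hδ3 : δ^3 ≤ δ := by nlinarith
  refine ⟨![s 0 * a, s 1 * b, s 2 * δ^3], ?_, ?_⟩
  · rw [pi_norm_lt_iff hε]
    intro i
    fin_cases i <;>
      simp [abs_mul, habs0, habs1, habs2]
    · rw [abs_of_pos ha0]; linarith
    · rw [abs_of_pos hb0]; linarith
    · rw [abs_of_pos hδ0]; nlinarith
  · have k0 : Real.sign (s 0 * a) = s 0 := by
      rcases hs 0 with h | h <;> rw [h]
      · simpa using Real.sign_of_pos ha0
      · rw [neg_one_mul]; exact Real.sign_of_neg (by linarith)
    have k1 : Real.sign (s 1 * b) = s 1 := by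
      rcases hs 1 with h | h <;> rw [h]
      · simpa using Real.sign_of_pos hb0
      · rw [neg_one_mul]; exact Real.sign_of_neg (by linarith)
    have hδ3pos : 0 < δ^3 := by positivity
    have k2 : Real.sign (s 2 * δ^3) = s 2 := by
      rcases hs 2 with h | h <;> rw [h]
      · simpa using Real.sign_of_pos hδ3pos
      · rw [neg_one_mul]; exact Real.sign_of_neg (by linarith)
    have k3 : Real.sign (s 2 * δ ^ 3 - (s 0 * a) ^ 2 + (s 1 * b) ^ 2) = s 3 := by
      have h0 : (s 0)^2 = 1 := by rcases hs 0 with h | h <;> rw [h] <;> norm_num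
      have h1 : (s 1)^2 = 1 := by rcases hs 1 with h | h <;> rw [h] <;> norm_num
      have heq : s 2 * δ ^ 3 - (s 0 * a) ^ 2 + (s 1 * b) ^ 2
          = s 2 * δ^3 + s 3 * (3*δ^2) := by
        rw [mul_pow, mul_pow, h0, h1, ← hba]; ring
      rw [heq]
      have hd3 : δ^3 < 3*δ^2 := by nlinarith
      have hup : s 2 * δ^3 ≤ δ^3 := by
        rcases hs 2 with h | h <;> rw [h] <;> nlinarith
      have hlo : -(δ^3) ≤ s 2 * δ^3 := by
        rcases hs 2 with h | h <;> rw [h] <;> nlinarith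
      rcases hs 3 with h3 | h3 <;> rw [h3]
      · apply Real.sign_of_pos; simp only [one_mul]; linarith
      · apply Real.sign_of_neg; simp only [neg_one_mul]; linarith
    intro i
    fin_cases i
    · simpa using k0
    · simpa using k1
    · simpa using k2
    · simpa using k3
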